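/- arXiv:2105.04044 — 2 statements merged into one kernel-verified Lean document; each statement's English description precedes it below -/
import Mathlib

section
/- Let |Ψ⟩ be a unit vector, and let M_A, N_A, P_B, Q_B be unitary operators with each of P_B, Q_B commuting with each of M_A, N_A, and with [N_A, M_A]|Ψ⟩ = 0 exactly. If ‖(M_A − P_B)|Ψ⟩‖ ≤ δ and ‖(N_A − Q_B)|Ψ⟩‖ ≤ δ, then ‖[P_B, Q_B]|Ψ⟩‖ ≤ 4δ. -/
/-- Transfer of state-dependent commutation: if `P_B, Q_B` agree with `M_A, N_A` on the
state up to `δ`, commute with them exactly, and `[N_A, M_A]|Ψ⟩ = 0`, then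
`‖[P_B, Q_B]|Ψ⟩‖ ≤ 4δ`. -/
theorem commutation_transfer {E : Type*} [NormedAddCommGroup E] [InnerProductSpace ℂ E]
    [CompleteSpace E] (Ψ : E) (hΨ : ‖Ψ‖ = 1) (MA NA PB QB : E →L[ℂ] E) (δ : ℝ)
    (hMA : MA ∈ unitary (E →L[ℂ] E)) (hNA : NA ∈ unitary (E →L[ℂ] E))
    (hPB : PB ∈ unitary (E →L[ℂ] E)) (hQB : QB ∈ unitary (E →L[ℂ] E))
    (hc1 : Commute PB MA) (hc2 : Commute PB NA)
    (hc3 : Commute QB MA) (hc4 : Commute QB NA)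
    (hcomm : (NA * MA - MA * NA) Ψ = 0)
    (h1 : ‖(MA - PB) Ψ‖ ≤ δ) (h2 : ‖(NA - QB) Ψ‖ ≤ δ) :
    ‖(PB * QB - QB * PB) Ψ‖ ≤ 4 * δ := by
  have key : ∀ x y : E, PB (QB Ψ) - QB (PB Ψ)
      = PB (QB Ψ - NA Ψ) + NA (PB Ψ - MA Ψ) + (NA (MA Ψ) - MA (NA Ψ))
        + MA (NA Ψ - QB Ψ) + QB (MA Ψ - PB Ψ)
        + ((PB (NA Ψ) - NA (PB Ψ)) + (MA (QB Ψ) - QB (MA Ψ))) := by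
    intro x y; simp only [map_sub]; abel
  have e1 : PB (NA Ψ) = NA (PB Ψ) := by
    have := congrArg (· Ψ) hc2; simpa using this
  have e2 : MA (QB Ψ) = QB (MA Ψ) := by
    have := congrArg (· Ψ) hc3.symm; simpa using this
  have e3 : NA (MA Ψ) - MA (NA Ψ) = 0 := by simpa [sub_eq_zero] using hcomm
  have n1 : ‖PB (QB Ψ - NA Ψ)‖ ≤ δ := by
    rw [ContinuousLinearMap.norm_map_of_mem_unitary hPB]
    calc ‖QB Ψ - NA Ψ‖ = ‖(NA - QB) Ψ‖ := by rw [← norm_neg]; simp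
    _ ≤ δ := h2
  have n2 : ‖NA (PB Ψ - MA Ψ)‖ ≤ δ := by
    rw [ContinuousLinearMap.norm_map_of_mem_unitary hNA]
    calc ‖PB Ψ - MA Ψ‖ = ‖(MA - PB) Ψ‖ := by rw [← norm_neg]; simp
    _ ≤ δ := h1
  have n3 : ‖MA (NA Ψ - QB Ψ)‖ ≤ δ := by
    rw [ContinuousLinearMap.norm_map_of_mem_unitary hMA]
    simpa using h2
  have n4 : ‖QB (MA Ψ - PB Ψ)‖ ≤ δ := by
    rw [ContinuousLinearMap.norm_map_of_mem_unitary hQB]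
    simpa using h1
  have : (PB * QB - QB * PB) Ψ = PB (QB Ψ) - QB (PB Ψ) := by simp
  rw [this, key Ψ Ψ, e1, e2, e3]
  simp only [sub_self, add_zero, zero_add]
  calc ‖PB (QB Ψ - NA Ψ) + NA (PB Ψ - MA Ψ) + MA (NA Ψ - QB Ψ) + QB (MA Ψ - PB Ψ)‖
      ≤ ‖PB (QB Ψ - NA Ψ) + NA (PB Ψ - MA Ψ) + MA (NA Ψ - QB Ψ)‖ + ‖QB (MA Ψ - PB Ψ)‖ :=
        norm_add_le _ _
    _ ≤ (‖PB (QB Ψ - NA Ψ) + NA (PB Ψ - MA Ψ)‖ + ‖MA (NA Ψ - QB Ψ)‖) + ‖QB (MA Ψ - PB Ψ)‖ := by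
        gcongr; exact norm_add_le _ _
    _ ≤ ((‖PB (QB Ψ - NA Ψ)‖ + ‖NA (PB Ψ - MA Ψ)‖) + ‖MA (NA Ψ - QB Ψ)‖) + ‖QB (MA Ψ - PB Ψ)‖ := by
        gcongr; exact norm_add_le _ _
    _ ≤ ((δ + δ) + δ) + δ := by gcongr
    _ = 4 * δ := by ring
end

section
/- Let |Ψ⟩ be a unit vector and let X_A, Z_A, X_B, Z_B be unitary operators such that X_A, Z_A each commute with X_B, Z_B. If ‖(X_A − X_B)|Ψ⟩‖ ≤ δ, ‖(Z_A − Z_B)|Ψ⟩‖ ≤ δ, and ‖{X_A, Z_A}|Ψ⟩‖ ≤ η, then ‖{X_B, Z_B}|Ψ⟩‖ ≤ η + 4δ. -/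
/-- Transfer of state-dependent anticommutation from Alice's observables to Bob's. -/
theorem anticommutation_transfer {E : Type*} [NormedAddCommGroup E] [InnerProductSpace ℂ E]
    [CompleteSpace E] (Ψ : E) (hΨ : ‖Ψ‖ = 1) (XA ZA XB ZB : E →L[ℂ] E) (δ η : ℝ)
    (hXA : XA ∈ unitary (E →L[ℂ] E)) (hZA : ZA ∈ unitary (E →L[ℂ] E))
    (hXB : XB ∈ unitary (E →L[ℂ] E)) (hZB : ZB ∈ unitary (E →L[ℂ] E))
    (hc1 : Commute XA XB) (hc2 : Commute XA ZB)
    (hc3 : Commute ZA XB) (hc4 : Commute ZA ZB)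
    (h1 : ‖(XA - XB) Ψ‖ ≤ δ) (h2 : ‖(ZA - ZB) Ψ‖ ≤ δ)
    (h3 : ‖(XA * ZA + ZA * XA) Ψ‖ ≤ η) :
    ‖(XB * ZB + ZB * XB) Ψ‖ ≤ η + 4 * δ := by
  -- step 1: ‖XB ZB Ψ − ZA XA Ψ‖ ≤ 2δ
  have e1 : ‖XB (ZB Ψ) - ZA (XA Ψ)‖ ≤ 2 * δ := by
    have a1 : ‖XB (ZB Ψ) - XB (ZA Ψ)‖ ≤ δ := by
      rw [← map_sub, XB.norm_map_of_mem_unitary hXB]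
      have : ZB Ψ - ZA Ψ = -((ZA - ZB) Ψ) := by
        simp [ContinuousLinearMap.sub_apply]
      rw [this, norm_neg]; exact h2
    have a2 : ‖ZA (XB Ψ) - ZA (XA Ψ)‖ ≤ δ := by
      rw [← map_sub, ZA.norm_map_of_mem_unitary hZA]
      have : XB Ψ - XA Ψ = -((XA - XB) Ψ) := by
        simp [ContinuousLinearMap.sub_apply]
      rw [this, norm_neg]; exact h1
    have hcomm : XB (ZA Ψ) = ZA (XB Ψ) := by
      have := congrArg (fun f : E →L[ℂ] E => f Ψ) hc3.symm
      simpa [ContinuousLinearMap.mul_apply] using this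
    calc ‖XB (ZB Ψ) - ZA (XA Ψ)‖
        = ‖(XB (ZB Ψ) - XB (ZA Ψ)) + (ZA (XB Ψ) - ZA (XA Ψ))‖ := by
          rw [hcomm] at *; abel_nf
      _ ≤ ‖XB (ZB Ψ) - XB (ZA Ψ)‖ + ‖ZA (XB Ψ) - ZA (XA Ψ)‖ := norm_add_le _ _
      _ ≤ δ + δ := add_le_add a1 a2
      _ = 2 * δ := by ring
  -- step 2: ‖ZB XB Ψ − XA ZA Ψ‖ ≤ 2δ
  have e2 : ‖ZB (XB Ψ) - XA (ZA Ψ)‖ ≤ 2 * δ := by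
    have a1 : ‖ZB (XB Ψ) - ZB (XA Ψ)‖ ≤ δ := by
      rw [← map_sub, ZB.norm_map_of_mem_unitary hZB]
      have : XB Ψ - XA Ψ = -((XA - XB) Ψ) := by
        simp [ContinuousLinearMap.sub_apply]
      rw [this, norm_neg]; exact h1
    have a2 : ‖XA (ZB Ψ) - XA (ZA Ψ)‖ ≤ δ := by
      rw [← map_sub, XA.norm_map_of_mem_unitary hXA]
      have : ZB Ψ - ZA Ψ = -((ZA - ZB) Ψ) := by
        simp [ContinuousLinearMap.sub_apply]
      rw [this, norm_neg]; exact h2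
    have hcomm : ZB (XA Ψ) = XA (ZB Ψ) := by
      have := congrArg (fun f : E →L[ℂ] E => f Ψ) hc2.symm
      simpa [ContinuousLinearMap.mul_apply] using this
    calc ‖ZB (XB Ψ) - XA (ZA Ψ)‖
        = ‖(ZB (XB Ψ) - ZB (XA Ψ)) + (XA (ZB Ψ) - XA (ZA Ψ))‖ := by
          rw [← hcomm]; abel_nf
      _ ≤ ‖ZB (XB Ψ) - ZB (XA Ψ)‖ + ‖XA (ZB Ψ) - XA (ZA Ψ)‖ := norm_add_le _ _
      _ ≤ δ + δ := add_le_add a1 a2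
      _ = 2 * δ := by ring
  have key : (XB * ZB + ZB * XB) Ψ =
      (XA * ZA + ZA * XA) Ψ + (XB (ZB Ψ) - ZA (XA Ψ)) + (ZB (XB Ψ) - XA (ZA Ψ)) := by
    simp [ContinuousLinearMap.add_apply, ContinuousLinearMap.mul_apply]
    abel
  calc ‖(XB * ZB + ZB * XB) Ψ‖
      ≤ ‖(XA * ZA + ZA * XA) Ψ‖ + ‖XB (ZB Ψ) - ZA (XA Ψ)‖ + ‖ZB (XB Ψ) - XA (ZA Ψ)‖ := by
        rw [key]; exact (norm_add_le _ _).trans (by gcongr; exact norm_add_le _ _)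
    _ ≤ η + 2 * δ + 2 * δ := by gcongr
    _ = η + 4 * δ := by ring
end
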